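/- Let μ ≥ 0, δ ∈ (0,1), and let N ≥ 0 be a real number satisfying N ≤ μ + √(2·μ·log(1/δ)) + (2/3)·log(1/δ). Then μ ≥ max{0, N − √(2·N·log(1/δ))}. -/

import Mathlib

open Real

/-! The map `x ↦ x + √(2xL) + (2/3)L` is increasing and sends `m = N - √(2NL)` below `N`:
writing `s = √(2NL)`, one has `2mL = s² - 2sL ≤ (s - 2L/3)²`. Hence `μ < m` would force
`N > μ + √(2μL) + (2/3)L`. When `L ≤ 0` all square roots vanish and the claim is immediate. -/

section
variable {μ N L : ℝ}

theorem add_sqrt_add_le_of_sub_sqrt_pos (hL : 0 ≤ L) (hm : 0 < N - √(2 * N * L)) :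
    (N - √(2 * N * L)) + √(2 * (N - √(2 * N * L)) * L) + (2 / 3) * L ≤ N := by
  set s := √(2 * N * L)
  have hs : 0 ≤ s := sqrt_nonneg _
  have hsq : s ^ 2 = 2 * N * L := sq_sqrt (by nlinarith)
  -- `s (s - 2L) = 2L (N - s) ≥ 0`
  have hs_ge : 2 * L ≤ s := by
    rcases hs.eq_or_lt with hs0 | hs0 <;> nlinarith
  have hrad : 2 * (N - s) * L ≤ (s - (2 / 3) * L) ^ 2 := by nlinarith
  have hroot : √(2 * (N - s) * L) ≤ s - (2 / 3) * L :=
    (sqrt_le_left (by linarith)).mpr hrad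
  linarith

theorem sub_sqrt_le_of_le_add_sqrt (hμ : 0 ≤ μ)
    (h : N ≤ μ + √(2 * μ * L) + (2 / 3) * L) : N - √(2 * N * L) ≤ μ := by
  rcases le_or_gt L 0 with hL | hL
  · have hμL : √(2 * μ * L) = 0 := sqrt_eq_zero_of_nonpos (by nlinarith)
    linarith [sqrt_nonneg (2 * N * L)]
  · by_contra! hlt
    have hm : 0 < N - √(2 * N * L) := hμ.trans_lt hlt
    have hmono : √(2 * μ * L) ≤ √(2 * (N - √(2 * N * L)) * L) :=
      sqrt_le_sqrt (by gcongr)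
    linarith [add_sqrt_add_le_of_sub_sqrt_pos hL.le hm]

end

theorem mean_ge_Uminus (μ δ N : ℝ) (hμ : 0 ≤ μ)
    (h : N ≤ μ + Real.sqrt (2 * μ * Real.log (1 / δ)) + (2 / 3) * Real.log (1 / δ)) :
    max 0 (N - Real.sqrt (2 * N * Real.log (1 / δ))) ≤ μ :=
  max_le hμ (sub_sqrt_le_of_le_add_sqrt hμ h)
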